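/- arXiv:1511.09391 — 2 statements merged into one kernel-verified Lean document; each statement's English description precedes it below -/
import Mathlib

section
/- Let Λ be a hereditary artin algebra and M a finite-length Λ-module without self-extensions (Ext¹(M,M) = 0). If M is sincere (every simple Λ-module occurs as a composition factor of M), then M is faithful. -/
open CategoryTheory

section Defs

variable (Λ : Type) [Ring Λ]

/-- `Ext¹(M, N) = 0`: every short exact sequence `0 → N → E → M → 0` splits. -/
def ExtVanish (M N : Type) [AddCommGroup M] [Module Λ M] [AddCommGroup N] [Module Λ N] : Prop :=
  ∀ (E : Type) [AddCommGroup E] [Module Λ E] (f : N →ₗ[Λ] E) (g : E →ₗ[Λ] M),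
    Function.Injective f → Function.Surjective g → LinearMap.range f = LinearMap.ker g →
    ∃ s : M →ₗ[Λ] E, g.comp s = LinearMap.id

/-- `X` generates `Y`: `Y` is a quotient of a finite direct sum of copies of `X`. -/
def Generates (X Y : Type) [AddCommGroup X] [Module Λ X] [AddCommGroup Y] [Module Λ Y] : Prop :=
  ∃ (n : ℕ) (g : (Fin n → X) →ₗ[Λ] Y), Function.Surjective g

/-- `X` cogenerates `Y`: `Y` embeds into a finite direct sum of copies of `X`. -/
def Cogenerates (X Y : Type) [AddCommGroup X] [Module Λ X] [AddCommGroup Y] [Module Λ Y] : Prop :=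
  ∃ (n : ℕ) (f : Y →ₗ[Λ] (Fin n → X)), Function.Injective f

/-- The endomorphism ring of `M` is a division ring. -/
def IsBrick (M : Type) [AddCommGroup M] [Module Λ M] : Prop :=
  (0 : Module.End Λ M) ≠ 1 ∧ ∀ f : Module.End Λ M, f ≠ 0 → IsUnit f

/-- `X ∈ add T`. -/
def InAdd (T X : Type) [AddCommGroup T] [Module Λ T] [AddCommGroup X] [Module Λ X] : Prop :=
  ∃ (m : ℕ) (ι : X →ₗ[Λ] (Fin m → T)) (p : (Fin m → T) →ₗ[Λ] X), p.comp ι = LinearMap.id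

/-- A module is normal if in any decomposition `M ≅ M' ⊕ M''` with `M'` generating `M''`,
the summand `M''` vanishes. -/
def IsNormal (M : Type) [AddCommGroup M] [Module Λ M] : Prop :=
  ∀ (M' M'' : Type) [AddCommGroup M'] [Module Λ M'] [AddCommGroup M''] [Module Λ M''],
    Nonempty (M ≃ₗ[Λ] M' × M'') → Generates Λ M' M'' → Subsingleton M''

/-- `N` is a normalization of `M`. -/
def IsNormalization (M N : Type) [AddCommGroup M] [Module Λ M] [AddCommGroup N] [Module Λ N] :
    Prop :=
  IsNormal Λ N ∧ ∃ Y : ModuleCat.{0} Λ, Nonempty (M ≃ₗ[Λ] N × Y) ∧ Generates Λ N Y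

/-- An indecomposable (nonzero) module. -/
def Indec (M : Type) [AddCommGroup M] [Module Λ M] : Prop :=
  ¬ Subsingleton M ∧ ∀ (P Q : Type) [AddCommGroup P] [Module Λ P] [AddCommGroup Q] [Module Λ Q],
    Nonempty (M ≃ₗ[Λ] P × Q) → Subsingleton P ∨ Subsingleton Q

/-- `S` is a composition factor of `M` (a subquotient, which for simple `S` is the same). -/
def IsCompositionFactor (M S : Type) [AddCommGroup M] [Module Λ M] [AddCommGroup S]
    [Module Λ S] : Prop :=
  ∃ (B A : Submodule Λ M), A ≤ B ∧
    Nonempty ((B ⧸ Submodule.comap B.subtype A) ≃ₗ[Λ] S)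

/-- Every simple module occurs as a composition factor of `M`. -/
def IsSincere (M : Type) [AddCommGroup M] [Module Λ M] : Prop :=
  ∀ (S : Type) [AddCommGroup S] [Module Λ S], IsSimpleModule Λ S → IsCompositionFactor Λ M S

/-- Submodules of projective modules are projective. -/
def IsHereditaryRing : Prop :=
  ∀ (P : Type) [AddCommGroup P] [Module Λ P], Module.Projective Λ P →
    ∀ N : Submodule Λ P, Module.Projective Λ N

/-- A finite family of pairwise orthogonal bricks. -/
def IsAntichainFam (t : ℕ) (A : Fin t → Type) [∀ i, AddCommGroup (A i)]
    [∀ i, Module Λ (A i)] : Prop :=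
  (∀ i, IsBrick Λ (A i)) ∧ ∀ i j, i ≠ j → ∀ f : A i →ₗ[Λ] A j, f = 0

/-- The antichain is exceptional: it can be reindexed so that `Ext¹(A i, A j) = 0` for `i ≥ j`,
i.e. its Ext-quiver is acyclic. -/
def IsExceptionalFam (t : ℕ) (A : Fin t → Type) [∀ i, AddCommGroup (A i)]
    [∀ i, Module Λ (A i)] : Prop :=
  ∃ σ : Equiv.Perm (Fin t), ∀ i j : Fin t, j ≤ i → ExtVanish Λ (A (σ i)) (A (σ j))

/-- `M` has a finite filtration with successive quotients among the `A j`. -/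
def HasFiltration (t : ℕ) (A : Fin t → Type) [∀ i, AddCommGroup (A i)] [∀ i, Module Λ (A i)]
    (M : Type) [AddCommGroup M] [Module Λ M] : Prop :=
  ∃ (s : ℕ) (F : Fin (s + 1) → Submodule Λ M), Monotone F ∧ F 0 = ⊥ ∧ F (Fin.last s) = ⊤ ∧
    ∀ i : Fin s, ∃ j : Fin t,
      Nonempty ((F i.succ ⧸ Submodule.comap (F i.succ).subtype (F i.castSucc)) ≃ₗ[Λ] A j)

/-- The subcategory `F(A)` of modules filtered by the antichain `A`. -/
def FiltClass (t : ℕ) (A : Fin t → Type) [∀ i, AddCommGroup (A i)] [∀ i, Module Λ (A i)] :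
    Set (ModuleCat.{0} Λ) :=
  {M | HasFiltration Λ t A M}

/-- A thick subcategory of `mod Λ`: closed under isomorphisms, finite direct sums, direct
summands, kernels, cokernels and extensions. -/
structure IsThick (𝒜 : Set (ModuleCat.{0} Λ)) : Prop where
  respIso : ∀ M N : ModuleCat.{0} Λ, (M ≃ₗ[Λ] N) → M ∈ 𝒜 → N ∈ 𝒜
  zero : ModuleCat.of Λ PUnit ∈ 𝒜
  prod : ∀ M N : ModuleCat.{0} Λ, M ∈ 𝒜 → N ∈ 𝒜 → ModuleCat.of Λ (M × N) ∈ 𝒜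
  summand : ∀ (M N : ModuleCat.{0} Λ), M ∈ 𝒜 →
    (∃ (ι : N →ₗ[Λ] M) (p : M →ₗ[Λ] N), p.comp ι = LinearMap.id) → N ∈ 𝒜
  ker : ∀ (M N : ModuleCat.{0} Λ) (f : M →ₗ[Λ] N), M ∈ 𝒜 → N ∈ 𝒜 →
    ModuleCat.of Λ (LinearMap.ker f) ∈ 𝒜
  coker : ∀ (M N : ModuleCat.{0} Λ) (f : M →ₗ[Λ] N), M ∈ 𝒜 → N ∈ 𝒜 →
    ModuleCat.of Λ (N ⧸ LinearMap.range f) ∈ 𝒜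
  extClosed : ∀ (M E N : ModuleCat.{0} Λ) (f : M →ₗ[Λ] E) (g : E →ₗ[Λ] N),
    Function.Injective f → Function.Surjective g → LinearMap.range f = LinearMap.ker g →
    M ∈ 𝒜 → N ∈ 𝒜 → E ∈ 𝒜

/-- A simple object of the (abelian) subcategory `𝒜`. -/
def IsSimpleIn (𝒜 : Set (ModuleCat.{0} Λ)) (M : ModuleCat.{0} Λ) : Prop :=
  M ∈ 𝒜 ∧ ¬ Subsingleton M ∧
    ∀ N : Submodule Λ M, ModuleCat.of Λ N ∈ 𝒜 → N = ⊥ ∨ N = ⊤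

/-- `C` is a cover of the subcategory `𝒜`. -/
def IsCoverOf (𝒜 : Set (ModuleCat.{0} Λ)) (C : ModuleCat.{0} Λ) : Prop :=
  C ∈ 𝒜 ∧ ∀ M ∈ 𝒜, Generates Λ C M

/-- `C` is a cocover of the subcategory `𝒜`. -/
def IsCocoverOf (𝒜 : Set (ModuleCat.{0} Λ)) (C : ModuleCat.{0} Λ) : Prop :=
  C ∈ 𝒜 ∧ ∀ M ∈ 𝒜, Cogenerates Λ C M

/-- A torsion class: a class of modules closed under quotients and extensions. -/
def IsTorsionClass (𝒞 : Set (ModuleCat.{0} Λ)) : Prop :=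
  (∀ M ∈ 𝒞, ∀ (N : ModuleCat.{0} Λ) (f : M →ₗ[Λ] N), Function.Surjective f → N ∈ 𝒞) ∧
  (∀ (M E N : ModuleCat.{0} Λ) (f : M →ₗ[Λ] E) (g : E →ₗ[Λ] N),
    Function.Injective f → Function.Surjective g → LinearMap.range f = LinearMap.ker g →
    M ∈ 𝒞 → N ∈ 𝒞 → E ∈ 𝒞)

/-- `𝒢(T)`: the (finite length) modules generated by `T`. -/
def GenClass (T : Type) [AddCommGroup T] [Module Λ T] : Set (ModuleCat.{0} Λ) :=
  {M | IsFiniteLength Λ M ∧ Generates Λ T M}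

/-- Membership in the two-sided ideal of `Λ` generated by the idempotents annihilating `M`. -/
def InSupportIdeal (M : Type) [AddCommGroup M] [Module Λ M] (a : Λ) : Prop :=
  ∃ (n : ℕ) (x y e : Fin n → Λ),
    (∀ i, IsIdempotentElem (e i) ∧ ∀ m : M, e i • m = 0) ∧ a = ∑ i, x i * e i * y i

end Defs

/-- `T` is a tilting `R`-module: no self-extensions, and `R` is the kernel of a surjective
map in `add T`. -/
def IsTiltingMod (R : Type) [Ring R] (T : Type) [AddCommGroup T] [Module R T] : Prop :=
  ExtVanish R T T ∧
    ∃ X Y : ModuleCat.{0} R, InAdd R T X ∧ InAdd R T Y ∧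
      ∃ (f : R →ₗ[R] X) (g : X →ₗ[R] Y),
        Function.Injective f ∧ Function.Surjective g ∧ LinearMap.range f = LinearMap.ker g

/-- `T` is support-tilting: `T` is a tilting module over its support algebra `Λ(T)`
(presented as any quotient of `Λ` by the ideal generated by the idempotents killing `T`). -/
def IsSupportTilting (Λ : Type) [Ring Λ] (T : Type) [AddCommGroup T] [Module Λ T] : Prop :=
  ∀ (R : Type) [Ring R] (π : Λ →+* R), Function.Surjective π →
    (∀ a : Λ, π a = 0 ↔ InSupportIdeal Λ T a) →
    ∀ [Module R T], (∀ (a : Λ) (x : T), a • x = π a • x) → IsTiltingMod R T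

section MoreDefs
variable (Λ : Type) [Ring Λ]

/-- A factor complement `Y` for `N`: `Y` is generated by `N` and `N ⊕ Y` is support-tilting. -/
def IsFactorComplement (N Y : Type) [AddCommGroup N] [Module Λ N] [AddCommGroup Y]
    [Module Λ Y] : Prop :=
  Generates Λ N Y ∧ IsSupportTilting Λ (N × Y)

/-- A minimal factor complement: a factor complement all of whose factor-complement direct
summands are Morita equivalent to it. -/
def IsMinimalFactorComplement (N Y : Type) [AddCommGroup N] [Module Λ N] [AddCommGroup Y]
    [Module Λ Y] : Prop :=
  IsFactorComplement Λ N Y ∧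
    ∀ Y' : ModuleCat.{0} Λ, InAdd Λ Y Y' → IsFactorComplement Λ N Y' → InAdd Λ Y' Y

/-- `Λ` is representation-finite. -/
def IsRepFinite : Prop :=
  ∃ (t : ℕ) (R : Fin t → ModuleCat.{0} Λ),
    ∀ M : ModuleCat.{0} Λ, IsFiniteLength Λ M → Indec Λ M → ∃ i, Nonempty (M ≃ₗ[Λ] R i)

end MoreDefs
section ExtraDefs
variable (Λ : Type) [Ring Λ]

/-- `X ∈ add {Nf j : j ∈ S}`. -/
def InAddFam (t : ℕ) (Nf : Fin t → Type) [∀ i, AddCommGroup (Nf i)] [∀ i, Module Λ (Nf i)]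
    (S : Set (Fin t)) (X : Type) [AddCommGroup X] [Module Λ X] : Prop :=
  ∃ (m : ℕ) (c : Fin m → Fin t), (∀ a, c a ∈ S) ∧
    ∃ (ι : X →ₗ[Λ] ∀ a, Nf (c a)) (p : (∀ a, Nf (c a)) →ₗ[Λ] X), p.comp ι = LinearMap.id

/-- `X` is killed by the support ideal of `N`, i.e. `X` is a module over the
support algebra `Λ(N)`. -/
def KilledBySupportIdeal (N X : Type) [AddCommGroup N] [Module Λ N] [AddCommGroup X]
    [Module Λ X] : Prop :=
  ∀ a : Λ, InSupportIdeal Λ N a → ∀ x : X, a • x = 0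

end ExtraDefs

/-- An equivalence (automatically exact) between the abelian category `𝒜` and the category
of finite length modules over an artin algebra `B`. -/
structure ArtinAlgebraModel (Λ : Type) [Ring Λ] (𝒜 : Set (ModuleCat.{0} Λ)) where
  k' : Type
  [ck' : CommRing k']
  [ak' : IsArtinianRing k']
  B : Type
  [rB : Ring B]
  [algB : Algebra k' B]
  flB : IsFiniteLength k' B
  equiv : CategoryTheory.ObjectProperty.FullSubcategory (fun M : ModuleCat.{0} Λ => M ∈ 𝒜) ≌
    CategoryTheory.ObjectProperty.FullSubcategory (fun M : ModuleCat.{0} B => IsFiniteLength B M)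

/-- The hom-space from `x` to `y` in the linearization `kP` of a poset `P` over a field `k`:
it is `k` if `x ≤ y` and `0` otherwise; composition is multiplication in `k`. -/
def pHom (kk P : Type) [Field kk] [PartialOrder P] (x y : P) : Type :=
  {c : kk // ¬ x ≤ y → c = 0}

/-!
Let `I` be the annihilator of `M`. If `I ≠ 0`, it has a simple quotient `S`; since `I` is
projective (`Λ` is hereditary) and `S` is a subquotient of `M` (`M` is sincere), the projection
`I → S` lifts to a nonzero map `I → M`. But `Hom(I, M) = 0`: as `Λ` is artinian, `Λ ⧸ I` embeds
into a finite power `Mᵗ`, and over a hereditary ring `Ext¹(-, M)` turns monomorphisms into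
epimorphisms, so `Ext¹(Λ ⧸ I, M)` is a quotient of `Ext¹(Mᵗ, M) = 0`. Hence every map `I → M`
extends to `Λ`, i.e. is `i ↦ i • m`, which vanishes on `I`.
-/

open Function

namespace ExtVanish

variable {Λ : Type} [Ring Λ] {M : Type} [AddCommGroup M] [Module Λ M]

theorem exists_retraction {C E : Type} [AddCommGroup C] [Module Λ C] [AddCommGroup E]
    [Module Λ E] (hC : ExtVanish Λ C M) {f : M →ₗ[Λ] E} {g : E →ₗ[Λ] C}
    (hf : Injective f) (hg : Surjective g) (hfg : Exact f g) :
    ∃ r : E →ₗ[Λ] M, r ∘ₗ f = LinearMap.id := by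
  obtain ⟨s, hs⟩ := hC E f g hf hg (LinearMap.exact_iff.mp hfg).symm
  exact ⟨_, ((hfg.splitInjectiveEquiv hg).symm (hfg.splitSurjectiveEquiv hf ⟨s, hs⟩)).2⟩

theorem exists_lift {Z E X : Type} [AddCommGroup Z] [Module Λ Z] [AddCommGroup E] [Module Λ E]
    [AddCommGroup X] [Module Λ X] (hZ : ExtVanish Λ Z M) {f : M →ₗ[Λ] E} {g : E →ₗ[Λ] X}
    (hf : Injective f) (hg : Surjective g) (hfg : Exact f g) (u : Z →ₗ[Λ] X) :
    ∃ s : Z →ₗ[Λ] E, g ∘ₗ s = u := by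
  -- `P` is the pullback of `g` along `u`.
  let P := LinearMap.ker (g ∘ₗ LinearMap.fst Λ E Z - u ∘ₗ LinearMap.snd Λ E Z)
  have mem_P {e : E} {z : Z} : (e, z) ∈ P ↔ g e = u z := by
    simp [P, sub_eq_zero]
  let f' : M →ₗ[Λ] P := LinearMap.codRestrict P (LinearMap.inl Λ E Z ∘ₗ f) fun m =>
    mem_P.mpr <| by simp [hfg.apply_apply_eq_zero]
  let g' : P →ₗ[Λ] Z := LinearMap.snd Λ E Z ∘ₗ P.subtype
  have hf' : Injective f' := fun m m' h => hf congr(($h : E × Z).1)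
  have hg' : Surjective g' := fun z => by
    obtain ⟨e, he⟩ := hg (u z)
    exact ⟨⟨(e, z), mem_P.mpr he⟩, rfl⟩
  have hfg' : LinearMap.range f' = LinearMap.ker g' := by
    ext ⟨⟨e, z⟩, hez⟩
    constructor
    · rintro ⟨m, hm⟩
      rw [← hm]
      rfl
    · intro (hz : z = 0)
      subst hz
      obtain ⟨m, rfl⟩ := (hfg e).mp (by simpa using mem_P.mp hez)
      exact ⟨m, rfl⟩
  obtain ⟨σ, hσ⟩ := hZ P f' g' hf' hg' hfg'
  refine ⟨LinearMap.fst Λ E Z ∘ₗ P.subtype ∘ₗ σ, LinearMap.ext fun z => ?_⟩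
  have hz : (σ z : E × Z).2 = z := LinearMap.congr_fun hσ z
  simpa [hz] using mem_P.mp (σ z).2

theorem pi (hM : ExtVanish Λ M M) (ι : Type) [Fintype ι] [DecidableEq ι] :
    ExtVanish Λ (ι → M) M := by
  intro E _ _ f g hf hg hfg
  choose s hs using fun i => hM.exists_lift hf hg (LinearMap.exact_iff.mpr hfg.symm)
    (LinearMap.single Λ (fun _ => M) i)
  have hs' (i : ι) (x : M) : g (s i x) = Pi.single i x := LinearMap.congr_fun (hs i) x
  refine ⟨∑ i, s i ∘ₗ LinearMap.proj i, LinearMap.ext fun x => ?_⟩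
  simp [hs', Finset.univ_sum_single]

theorem exists_extend {A B C : Type} [AddCommGroup A] [Module Λ A] [AddCommGroup B] [Module Λ B]
    [AddCommGroup C] [Module Λ C] (hC : ExtVanish Λ C M) {j : A →ₗ[Λ] B} {q : B →ₗ[Λ] C}
    (hj : Injective j) (hq : Surjective q) (hjq : Exact j q) (h : A →ₗ[Λ] M) :
    ∃ φ : B →ₗ[Λ] M, φ ∘ₗ j = h := by
  -- `(M × B) ⧸ W` is the pushout of `j` along `h`.
  let W := LinearMap.range (h.prod (-j))
  have mk_inr_eq (a : A) : W.mkQ (0, j a) = W.mkQ (h a, 0) :=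
    (Submodule.Quotient.eq W).mpr ⟨-a, by simp⟩
  let ι : M →ₗ[Λ] (M × B) ⧸ W := W.mkQ ∘ₗ LinearMap.inl Λ M B
  let π : (M × B) ⧸ W →ₗ[Λ] C := W.liftQ (q ∘ₗ LinearMap.snd Λ M B) <| by
    rintro _ ⟨a, rfl⟩
    simp [hjq.apply_apply_eq_zero]
  have hι : Injective ι := by
    refine (injective_iff_map_eq_zero ι).mpr fun m hm => ?_
    obtain ⟨a, ha⟩ := (Submodule.Quotient.mk_eq_zero W).mp hm
    obtain rfl : a = 0 := hj (by simpa using congr(($ha).2))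
    simpa using ha.symm
  have hπ : Surjective π := fun c => by
    obtain ⟨b, rfl⟩ := hq c
    exact ⟨W.mkQ (0, b), rfl⟩
  have hιπ : Exact ι π := by
    intro x
    obtain ⟨⟨m, b⟩, rfl⟩ := W.mkQ_surjective x
    constructor
    · intro (hb : q b = 0)
      obtain ⟨a, rfl⟩ := (hjq b).mp hb
      refine ⟨m + h a, ?_⟩
      calc ι (m + h a) = W.mkQ (m, 0) + W.mkQ (h a, 0) := by
            rw [← map_add, Prod.mk_add_mk, add_zero]; rfl
        _ = W.mkQ (m, j a) := by rw [← mk_inr_eq, ← map_add]; simp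
    · rintro ⟨m', hm'⟩
      rw [← hm']
      simp [ι, π]
  obtain ⟨r, hr⟩ := hC.exists_retraction hι hπ hιπ
  refine ⟨r ∘ₗ W.mkQ ∘ₗ LinearMap.inr Λ M B, LinearMap.ext fun a => ?_⟩
  change r (W.mkQ (0, j a)) = h a
  rw [mk_inr_eq]
  exact LinearMap.congr_fun hr (h a)

theorem of_forall_exists_extend {A B C : Type} [AddCommGroup A] [Module Λ A] [AddCommGroup B]
    [Module Λ B] [Module.Projective Λ B] [AddCommGroup C] [Module Λ C]
    {j : A →ₗ[Λ] B} {q : B →ₗ[Λ] C} (hq : Surjective q) (hjq : Exact j q)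
    (hextend : ∀ h : A →ₗ[Λ] M, ∃ φ : B →ₗ[Λ] M, φ ∘ₗ j = h) : ExtVanish Λ C M := by
  intro E _ _ f g hf hg hfg
  obtain ⟨β, hβ⟩ := Module.projective_lifting_property g q hg
  have hβj (a : A) : β (j a) ∈ LinearMap.range f := by
    rw [hfg, LinearMap.mem_ker, ← LinearMap.comp_apply, hβ, hjq.apply_apply_eq_zero]
  let e := LinearEquiv.ofInjective f hf
  obtain ⟨φ, hφ⟩ := hextend (e.symm.toLinearMap ∘ₗ LinearMap.codRestrict _ (β ∘ₗ j) hβj)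
  have hfφ (a : A) : f (φ (j a)) = β (j a) := by
    rw [← LinearMap.comp_apply φ j, hφ]
    exact congr_arg Subtype.val (e.apply_symm_apply ⟨β (j a), hβj a⟩)
  let δ := β - f ∘ₗ φ
  have hδ : LinearMap.ker q ≤ LinearMap.ker δ := by
    intro b hb
    obtain ⟨a, rfl⟩ := (hjq b).mp hb
    simp [δ, hfφ]
  refine ⟨(LinearMap.ker q).liftQ δ hδ ∘ₗ (q.quotKerEquivOfSurjective hq).symm.toLinearMap,
    LinearMap.ext fun c => ?_⟩
  obtain ⟨b, rfl⟩ := hq c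
  have hgf (m : M) : g (f m) = 0 := by
    rw [← LinearMap.mem_ker, ← hfg]
    exact LinearMap.mem_range_self f m
  simp [LinearMap.quotKerEquivOfSurjective_symm_apply, δ, hgf, ← LinearMap.comp_apply g β, hβ]

theorem of_injective (hher : IsHereditaryRing Λ) {X Y : Type} [AddCommGroup X] [Module Λ X]
    [AddCommGroup Y] [Module Λ Y] (hX : ExtVanish Λ X M) {i : Y →ₗ[Λ] X} (hi : Injective i) :
    ExtVanish Λ Y M := by
  let α := Finsupp.linearCombination Λ (id : X → X)
  have hα : Surjective α := Finsupp.linearCombination_id_surjective Λ X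
  let P := (LinearMap.range i).comap α
  have : Module.Projective Λ P := hher _ inferInstance P
  let q : P →ₗ[Λ] Y :=
    (LinearEquiv.ofInjective i hi).symm.toLinearMap ∘ₗ α.restrict fun _ hp => hp
  have hKP : LinearMap.ker α ≤ P := fun p hp => by simp [P, LinearMap.mem_ker.mp hp]
  refine of_forall_exists_extend (A := LinearMap.ker α) (B := P) (j := Submodule.inclusion hKP)
    (q := q) ?_ ?_ fun h => ?_
  · intro y
    obtain ⟨p, hp⟩ := hα (i y)
    exact ⟨⟨p, y, hp.symm⟩, (LinearEquiv.symm_apply_eq _).mpr (Subtype.ext hp)⟩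
  · rintro ⟨p, hp⟩
    have hq0 : q ⟨p, hp⟩ = 0 ↔ α p = 0 := by
      simp [q, LinearMap.restrict_apply]
    rw [hq0]
    constructor
    · intro h0
      exact ⟨⟨p, h0⟩, rfl⟩
    · rintro ⟨⟨p', hp'⟩, h⟩
      obtain rfl : p' = p := congr_arg Subtype.val h
      exact hp'
  · obtain ⟨φ, hφ⟩ := hX.exists_extend (A := LinearMap.ker α)
      (LinearMap.ker α).injective_subtype hα α.exact_subtype_ker_map h
    exact ⟨φ ∘ₗ P.subtype, hφ⟩

end ExtVanish

section Annihilator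

variable {Λ : Type} [Ring Λ] {M : Type} [AddCommGroup M] [Module Λ M]

theorem exists_finset_ker_pi_eq_annihilator [IsArtinian Λ Λ] :
    ∃ t : Finset M, LinearMap.ker (LinearMap.pi fun m : t => LinearMap.toSpanSingleton Λ M m) =
      Module.annihilator Λ M := by
  classical
  let ann (m : M) : Submodule Λ Λ := LinearMap.ker (LinearMap.toSpanSingleton Λ M m)
  have ker_pi_eq (t : Finset M) :
      LinearMap.ker (LinearMap.pi fun m : t => LinearMap.toSpanSingleton Λ M m) = t.inf ann := by
    ext a
    simp [ann, Submodule.mem_finsetInf, funext_iff]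
  obtain ⟨_, ⟨t, rfl⟩, hmin⟩ :=
    IsArtinian.set_has_minimal (Set.range fun t : Finset M => t.inf ann) ⟨_, ∅, rfl⟩
  have inf_le_ann (m : M) : t.inf ann ≤ ann m := by
    have hins : (insert m t).inf ann = t.inf ann :=
      eq_of_le_of_not_lt (Finset.inf_mono (Finset.subset_insert m t)) (hmin _ ⟨_, rfl⟩)
    exact hins ▸ Finset.inf_le (Finset.mem_insert_self m t)
  refine ⟨t, (ker_pi_eq t).trans (le_antisymm (fun a ha => ?_) fun a ha => ?_)⟩
  · exact Module.mem_annihilator.mpr fun m => by simpa [ann] using inf_le_ann m ha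
  · exact Submodule.mem_finsetInf.mpr fun m _ => by simp [ann, Module.mem_annihilator.mp ha]

theorem linearMap_annihilator_eq_zero (hher : IsHereditaryRing Λ) [IsArtinian Λ Λ]
    (hM : ExtVanish Λ M M) (f : Module.annihilator Λ M →ₗ[Λ] M) : f = 0 := by
  classical
  obtain ⟨t, ht⟩ := exists_finset_ker_pi_eq_annihilator (Λ := Λ) (M := M)
  set c := LinearMap.pi fun m : t => LinearMap.toSpanSingleton Λ M m
  have hc : ExtVanish Λ (LinearMap.range c) M :=
    (hM.pi t).of_injective hher (LinearMap.range c).injective_subtype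
  have hexact : Exact (Module.annihilator Λ M).subtype c.rangeRestrict := by
    rw [LinearMap.exact_iff, LinearMap.ker_rangeRestrict, ht, Submodule.range_subtype]
  obtain ⟨φ, hφ⟩ := hc.exists_extend (Submodule.injective_subtype _) c.surjective_rangeRestrict
    hexact f
  ext ⟨a, ha⟩
  rw [← hφ]
  change φ a = 0
  rw [← mul_one a, ← smul_eq_mul, map_smul]
  exact Module.mem_annihilator.mp ha _

end Annihilator

theorem IsCompositionFactor.exists_linearMap_ne_zero {Λ M S P : Type} [Ring Λ] [AddCommGroup M]
    [Module Λ M] [AddCommGroup S] [Module Λ S] [Nontrivial S] [AddCommGroup P] [Module Λ P]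
    [Module.Projective Λ P] (hS : IsCompositionFactor Λ M S) {π : P →ₗ[Λ] S}
    (hπ : Surjective π) : ∃ f : P →ₗ[Λ] M, f ≠ 0 := by
  obtain ⟨B, A, -, ⟨e⟩⟩ := hS
  let A' := A.comap B.subtype
  obtain ⟨h, hh⟩ := Module.projective_lifting_property (e.toLinearMap ∘ₗ A'.mkQ) π
    (e.surjective.comp A'.mkQ_surjective)
  refine ⟨B.subtype ∘ₗ h, fun h0 => ?_⟩
  have h_eq : h = 0 := LinearMap.ext fun p => Subtype.ext (LinearMap.congr_fun h0 p)
  obtain ⟨s, hs⟩ := exists_ne (0 : S)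
  obtain ⟨p, rfl⟩ := hπ s
  exact hs (by rw [← hh, h_eq]; simp)

theorem stmt0_general (k : Type) [CommRing k]
    (Λ : Type) [Ring Λ] [Algebra k Λ] (hart : IsFiniteLength k Λ)
    (hher : IsHereditaryRing Λ)
    (M : Type) [AddCommGroup M] [Module Λ M]
    (hself : ExtVanish Λ M M) (hsin : IsSincere Λ M) :
    ∀ a : Λ, (∀ m : M, a • m = 0) → a = 0 := by
  obtain ⟨hnoeth, hartin⟩ := isFiniteLength_iff_isNoetherian_isArtinian.mp hart
  have : IsNoetherian Λ Λ := isNoetherian_of_tower k hnoeth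
  have : IsArtinian Λ Λ := isArtinian_of_tower k hartin
  suffices Module.annihilator Λ M = ⊥ from fun a ha =>
    (Submodule.mem_bot Λ).mp (this ▸ Module.mem_annihilator.mpr ha)
  by_contra hI
  have : Nontrivial (Module.annihilator Λ M) := Submodule.nontrivial_iff_ne_bot.mpr hI
  obtain ⟨C, hC⟩ := IsCoatomic.exists_coatom (Submodule Λ (Module.annihilator Λ M))
  have hsimple : IsSimpleModule Λ (_ ⧸ C) := isSimpleModule_iff_isCoatom.mpr hC
  have := IsSimpleModule.nontrivial Λ (_ ⧸ C)
  have : Module.Projective Λ (Module.annihilator Λ M) := hher Λ inferInstance _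
  obtain ⟨f, hf⟩ := (hsin _ hsimple).exists_linearMap_ne_zero C.mkQ_surjective
  exact hf (linearMap_annihilator_eq_zero hher hself f)

/-- A sincere module without self-extensions over a hereditary artin algebra is faithful. -/
theorem stmt0 (k : Type) [CommRing k] [IsArtinianRing k]
    (Λ : Type) [Ring Λ] [Algebra k Λ] (hart : IsFiniteLength k Λ)
    (hher : IsHereditaryRing Λ)
    (M : Type) [AddCommGroup M] [Module Λ M] (hMfl : IsFiniteLength Λ M)
    (hself : ExtVanish Λ M M) (hsin : IsSincere Λ M) :
    ∀ a : Λ, (∀ m : M, a • m = 0) → a = 0 :=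
  stmt0_general k Λ hart hher M hself hsin
end

section
/- Let Λ be a hereditary artin algebra and N = ⊕ᵢ Nᵢ a normal module without self-extensions, with the Nᵢ indecomposable. For each i let uᵢ : Uᵢ → Nᵢ be a minimal right add({N_j : j ≠ i})-approximation. Then uᵢ is injective and not surjective, and its cokernel Δ(i) is a nonzero brick. -/
open CategoryTheory

/-!
Normality forces `uᵢ` to be non-surjective: otherwise `⊕_{j ≠ i} N_j` would generate `N_i`.
Over a hereditary ring, a non-surjective map `v : V → X` into an indecomposable `X` of finite
length with `Ext¹(X, V) = 0` splits onto its image: comparing a projective presentation of `X`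
with one of `range v` produces an endomorphism `θ` of `X` with image inside `range v`, hence
nilpotent by Fitting's lemma, and `(1 - θ)⁻¹` yields the section. Right minimality turns this
splitting into injectivity of `uᵢ`, and applied to an endomorphism of `N_i` it shows that `N_i`
is a brick. Finally `Ext¹(N_i, U_i) = 0` lets every endomorphism of `Δ(i) = N_i / U_i` lift to
`N_i`, so `Δ(i)` is a brick too.
-/

open LinearMap

variable {Λ : Type} [Ring Λ]

section Indec

variable {X : Type} [AddCommGroup X] [Module Λ X]

theorem Indec.eq_bot_or_eq_bot_of_isCompl (hX : Indec Λ X) {p q : Submodule Λ X}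
    (hpq : IsCompl p q) : p = ⊥ ∨ q = ⊥ := by
  simpa only [Submodule.subsingleton_iff_eq_bot] using
    hX.2 p q ⟨(Submodule.prodEquivOfIsCompl p q hpq).symm⟩

theorem Indec.eq_zero_or_eq_one_of_isIdempotentElem (hX : Indec Λ X) {e : Module.End Λ X}
    (he : IsIdempotentElem e) : e = 0 ∨ e = 1 := by
  refine (hX.eq_bot_or_eq_bot_of_isCompl he.isCompl).imp range_eq_bot.mp fun hker => ?_
  ext x
  have := ker_eq_bot'.mp hker (x - e x) (by rw [map_sub, ← Module.End.mul_apply, he.eq, sub_self])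
  rw [sub_eq_zero] at this
  exact this.symm

theorem Indec.isUnit_or_isNilpotent (hX : Indec Λ X) (hfl : IsFiniteLength Λ X)
    (θ : Module.End Λ X) : IsUnit θ ∨ IsNilpotent θ := by
  obtain ⟨_, _⟩ := isFiniteLength_iff_isNoetherian_isArtinian.mp hfl
  obtain ⟨n, hn⟩ := Filter.eventually_atTop.mp θ.eventually_isCompl_ker_pow_range_pow
  refine (hX.eq_bot_or_eq_bot_of_isCompl (hn (n + 1) n.le_succ)).imp (fun hker => ?_)
    fun hrange => ⟨n + 1, range_eq_bot.mp hrange⟩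
  rw [← isUnit_pow_iff n.succ_ne_zero, Module.End.isUnit_iff]
  exact IsArtinian.bijective_of_injective_endomorphism _ (ker_eq_bot.mp hker)

end Indec

theorem LinearMap.exists_comp_eq_of_ker_le {P X V : Type*} [AddCommGroup P] [Module Λ P]
    [AddCommGroup X] [Module Λ X] [AddCommGroup V] [Module Λ V] {ρ : P →ₗ[Λ] X}
    (hρ : Function.Surjective ρ) {μ : P →ₗ[Λ] V} (h : ker ρ ≤ ker μ) :
    ∃ θ : X →ₗ[Λ] V, θ ∘ₗ ρ = μ :=
  ⟨(ker ρ).liftQ μ h ∘ₗ (ρ.quotKerEquivOfSurjective hρ).symm.toLinearMap, by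
    ext p
    have : (ρ.quotKerEquivOfSurjective hρ).symm (ρ p) = Submodule.Quotient.mk p :=
      (LinearEquiv.symm_apply_eq _).mpr rfl
    simp [this]⟩

section Ext

variable {M V E Y : Type} [AddCommGroup M] [Module Λ M] [AddCommGroup V] [Module Λ V]
  [AddCommGroup E] [Module Λ E] [AddCommGroup Y] [Module Λ Y]

theorem ExtVanish.exists_retraction_s3 (hMV : ExtVanish Λ M V) {f : V →ₗ[Λ] E} {g : E →ₗ[Λ] M}
    (hf : Function.Injective f) (hg : Function.Surjective g) (hfg : range f = ker g) :
    ∃ r : E →ₗ[Λ] V, r ∘ₗ f = LinearMap.id :=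
  ((exact_iff.mpr hfg.symm).split_tfae hf hg |>.out 0 1).mp (hMV E f g hf hg hfg)

theorem ExtVanish.exists_lift_s3 (hMV : ExtVanish Λ M V) {f : V →ₗ[Λ] E} {g : E →ₗ[Λ] Y}
    (hf : Function.Injective f) (hg : Function.Surjective g) (hfg : range f = ker g)
    (φ : M →ₗ[Λ] Y) : ∃ ψ : M →ₗ[Λ] E, g ∘ₗ ψ = φ := by
  -- the pullback of `g` along `φ`, an extension of `M` by `V`
  let Q := ker (g ∘ₗ fst Λ E M - φ ∘ₗ snd Λ E M)
  have mem_Q {z : E × M} : z ∈ Q ↔ g z.1 = φ z.2 := by simp [Q, sub_eq_zero]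
  let f' : V →ₗ[Λ] Q := (inl Λ E M ∘ₗ f).codRestrict Q fun v => mem_Q.mpr <| by
    simpa using hfg.le (mem_range_self f v)
  let g' : Q →ₗ[Λ] M := snd Λ E M ∘ₗ Q.subtype
  obtain ⟨s, hs⟩ := hMV Q f' g'
    (fun v w h => hf congr(Prod.fst (Subtype.val $h)))
    (fun m => let ⟨e, he⟩ := hg (φ m); ⟨⟨(e, m), mem_Q.mpr he⟩, rfl⟩)
    (by
      ext ⟨⟨e, m⟩, hz⟩
      simp only [mem_range, mem_ker, g', f', coe_comp, Function.comp_apply, Submodule.coe_subtype,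
        snd_apply, Subtype.ext_iff, codRestrict_apply, inl_apply, Prod.ext_iff]
      constructor
      · rintro ⟨v, -, rfl⟩
        rfl
      · rintro rfl
        obtain ⟨v, rfl⟩ := hfg.ge (by simpa using mem_Q.mp hz)
        exact ⟨v, rfl, rfl⟩)
  refine ⟨fst Λ E M ∘ₗ Q.subtype ∘ₗ s, LinearMap.ext fun m => ?_⟩
  simpa using (mem_Q.mp (s m).2).trans congr(φ ($hs m))

theorem ExtVanish.of_retract_left {M' : Type} [AddCommGroup M'] [Module Λ M']
    (hMV : ExtVanish Λ M V) (ι : M' →ₗ[Λ] M) (r : M →ₗ[Λ] M') (hrι : r ∘ₗ ι = LinearMap.id) :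
    ExtVanish Λ M' V := by
  intro E _ _ f g hf hg hfg
  obtain ⟨ψ, hψ⟩ := hMV.exists_lift_s3 hf hg hfg r
  exact ⟨ψ ∘ₗ ι, by rw [← comp_assoc, hψ, hrι]⟩

end Ext

section ExtendsFromKer

variable {P X : Type} [AddCommGroup P] [Module Λ P] [AddCommGroup X] [Module Λ X]

/-- For a projective presentation `ρ : P ↠ X` this says `Ext¹(X, V) = 0`. -/
def ExtendsFromKer (ρ : P →ₗ[Λ] X) (V : Type*) [AddCommGroup V] [Module Λ V] : Prop :=
  ∀ h : ker ρ →ₗ[Λ] V, ∃ g : P →ₗ[Λ] V, g ∘ₗ (ker ρ).subtype = h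

variable {ρ : P →ₗ[Λ] X}

theorem ExtendsFromKer.pi {ι : Type*} {V : ι → Type*} [∀ a, AddCommGroup (V a)]
    [∀ a, Module Λ (V a)] (hV : ∀ a, ExtendsFromKer ρ (V a)) : ExtendsFromKer ρ (∀ a, V a) := by
  intro h
  choose g hg using fun a => hV a (proj a ∘ₗ h)
  exact ⟨LinearMap.pi g, by ext ω a; exact congr($(hg a) ω)⟩

theorem ExtendsFromKer.of_retract {V V' : Type*} [AddCommGroup V] [Module Λ V]
    [AddCommGroup V'] [Module Λ V'] (hV : ExtendsFromKer ρ V) (ι : V' →ₗ[Λ] V)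
    (r : V →ₗ[Λ] V') (hrι : r ∘ₗ ι = LinearMap.id) : ExtendsFromKer ρ V' := by
  intro h
  obtain ⟨g, hg⟩ := hV (ι ∘ₗ h)
  exact ⟨r ∘ₗ g, by rw [comp_assoc, hg, ← comp_assoc, hrι, id_comp]⟩

variable {V : Type} [AddCommGroup V] [Module Λ V]

theorem ExtVanish.extendsFromKer (hXV : ExtVanish Λ X V) (hρ : Function.Surjective ρ) :
    ExtendsFromKer ρ V := by
  intro h
  -- `(V × P) ⧸ W` is the pushout of `ker ρ ↪ P` along `h`
  let W := range (h.prod (-(ker ρ).subtype))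
  have hW : W ≤ ker (ρ ∘ₗ snd Λ V P) := by
    rintro _ ⟨ω, rfl⟩
    simp
  let f : V →ₗ[Λ] (V × P) ⧸ W := W.mkQ ∘ₗ inl Λ V P
  let g : (V × P) ⧸ W →ₗ[Λ] X := W.liftQ (ρ ∘ₗ snd Λ V P) hW
  have mk_inr (ω : ker ρ) : W.mkQ (0, ω) = f (h ω) :=
    (Submodule.Quotient.eq W).mpr ⟨-ω, by simp⟩
  obtain ⟨r, hr⟩ := hXV.exists_retraction_s3 (f := f) (g := g)
    (by
      rw [← ker_eq_bot, ker_comp, Submodule.ker_mkQ, eq_bot_iff]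
      rintro v ⟨ω, hω⟩
      obtain ⟨hv, hω⟩ := Prod.ext_iff.mp hω
      simp only [prod_apply, Function.prod, inl_apply, LinearMap.neg_apply, Submodule.coe_subtype,
        neg_eq_zero, ZeroMemClass.coe_eq_zero] at hv hω
      simp [← hv, hω])
    (fun x => let ⟨p, hp⟩ := hρ x; ⟨W.mkQ (0, p), hp⟩)
    (by
      refine le_antisymm (range_le_ker_iff.mpr (by ext; simp [f, g])) fun z hz => ?_
      obtain ⟨⟨v, p⟩, rfl⟩ := W.mkQ_surjective z
      have hp : p ∈ ker ρ := hz
      refine ⟨v + h ⟨p, hp⟩, ?_⟩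
      rw [map_add, ← mk_inr ⟨p, hp⟩]
      simp [f, ← Submodule.Quotient.mk_add])
  exact ⟨r ∘ₗ W.mkQ ∘ₗ inr Λ V P, by ext ω; simpa [mk_inr ω] using LinearMap.congr_fun hr (h ω)⟩

theorem ExtendsFromKer.extVanish [Module.Projective Λ P] (hV : ExtendsFromKer ρ V)
    (hρ : Function.Surjective ρ) : ExtVanish Λ X V := by
  intro E _ _ f g hf hg hfg
  obtain ⟨l, hl⟩ := Module.projective_lifting_property g ρ hg
  have hlK (ω : ker ρ) : l ω ∈ range f := by
    rw [hfg, mem_ker, ← LinearMap.comp_apply, hl]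
    exact ω.2
  obtain ⟨g₀, hg₀⟩ := hV ((LinearEquiv.ofInjective f hf).symm.toLinearMap ∘ₗ
    (l ∘ₗ (ker ρ).subtype).codRestrict _ hlK)
  obtain ⟨s, hs⟩ := exists_comp_eq_of_ker_le hρ (μ := l - f ∘ₗ g₀) fun p hp => by
    have := congr(f ($hg₀ ⟨p, hp⟩))
    simp only [coe_comp, Function.comp_apply, Submodule.coe_subtype,
      LinearEquiv.coe_toLinearMap, LinearEquiv.ofInjective_symm_apply] at this
    rw [mem_ker, LinearMap.sub_apply, LinearMap.comp_apply, this]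
    exact sub_self _
  refine ⟨s, (cancel_right hρ).mp ?_⟩
  rw [comp_assoc, hs, comp_sub, hl, ← comp_assoc, (exact_iff.mpr hfg.symm).linearMap_comp_eq_zero]
  simp

end ExtendsFromKer

section AddClosure

variable {X : Type} [AddCommGroup X] [Module Λ X]

theorem ExtVanish.pi_right {ι : Type} {V : ι → Type} [∀ a, AddCommGroup (V a)]
    [∀ a, Module Λ (V a)] (hV : ∀ a, ExtVanish Λ X (V a)) : ExtVanish Λ X (∀ a, V a) :=
  have hρ := Finsupp.linearCombination_id_surjective Λ X
  (ExtendsFromKer.pi fun a => (hV a).extendsFromKer hρ).extVanish hρ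

theorem ExtVanish.of_retract_right {V V' : Type} [AddCommGroup V] [Module Λ V]
    [AddCommGroup V'] [Module Λ V'] (hV : ExtVanish Λ X V) (ι : V' →ₗ[Λ] V) (r : V →ₗ[Λ] V')
    (hrι : r ∘ₗ ι = LinearMap.id) : ExtVanish Λ X V' :=
  have hρ := Finsupp.linearCombination_id_surjective Λ X
  ((hV.extendsFromKer hρ).of_retract ι r hrι).extVanish hρ

variable {t : ℕ} {Nf : Fin t → Type} [∀ i, AddCommGroup (Nf i)] [∀ i, Module Λ (Nf i)]
  {S : Set (Fin t)} {Y : Type} [AddCommGroup Y] [Module Λ Y]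

theorem ExtVanish.of_inAddFam (hN : ExtVanish Λ X (∀ j, Nf j)) (hY : InAddFam Λ t Nf S Y) :
    ExtVanish Λ X Y := by
  obtain ⟨m, c, -, ι, p, hpι⟩ := hY
  exact (ExtVanish.pi_right fun a => hN.of_retract_right (single Λ Nf (c a)) (proj (c a))
    (proj_comp_single_same Λ Nf (c a))).of_retract_right ι p hpι

theorem InAddFam.generates (hY : InAddFam Λ t Nf S Y) : Generates Λ (∀ j : S, Nf j) Y := by
  classical
  obtain ⟨m, c, hc, ι, p, hpι⟩ := hY
  let Φ : (Fin m → ∀ j : S, Nf j) →ₗ[Λ] ∀ a, Nf (c a) :=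
    LinearMap.pi fun a => proj (⟨c a, hc a⟩ : S) ∘ₗ proj a
  refine ⟨m, p ∘ₗ Φ, fun y => ⟨fun a => Pi.single (⟨c a, hc a⟩ : S) (ι y a), ?_⟩⟩
  have hΦ : Φ (fun a => Pi.single (⟨c a, hc a⟩ : S) (ι y a)) = ι y := by
    ext a
    simp [Φ]
  rw [LinearMap.comp_apply, hΦ, ← LinearMap.comp_apply, hpι, LinearMap.id_apply]

end AddClosure

section Hereditary

variable {X V : Type} [AddCommGroup X] [Module Λ X] [AddCommGroup V] [Module Λ V]

/-- Lift a projective presentation of `X`, restricted over `range v`, through `v`, and compare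
it with an extension of its restriction to the syzygy: `θ` is induced by the extension and `δ`
by the difference. Heredity makes the preimage of `range v` projective. -/
theorem IsHereditaryRing.exists_endomorphism_of_extVanish (hher : IsHereditaryRing Λ)
    (hXV : ExtVanish Λ X V) (v : V →ₗ[Λ] X) :
    ∃ (θ : Module.End Λ X) (δ : range v →ₗ[Λ] V), range θ ≤ range v ∧
      ∀ z : range v, v (δ z) = θ z - z := by
  let ρ := Finsupp.linearCombination Λ (id : X → X)
  have hρ : Function.Surjective ρ := Finsupp.linearCombination_id_surjective Λ X
  let PI := (range v).comap ρ
  have : Module.Projective Λ PI := hher _ inferInstance PI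
  let ρI : PI →ₗ[Λ] range v := ρ.restrict fun _ hp => hp
  have hρI : Function.Surjective ρI := fun ⟨y, hy⟩ =>
    let ⟨p, hp⟩ := hρ y
    ⟨⟨p, by simp [PI, hp, hy]⟩, Subtype.ext hp⟩
  obtain ⟨lam, hlam⟩ :=
    Module.projective_lifting_property v.rangeRestrict ρI v.surjective_rangeRestrict
  have hvlam (x : PI) : v (lam x) = ρ x := congr(Subtype.val ($hlam x))
  have hK : ker ρ ≤ PI := fun p hp => by simp [PI, mem_ker.mp hp]
  obtain ⟨μ, hμ⟩ := hXV.extendsFromKer hρ (lam ∘ₗ Submodule.inclusion hK)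
  have hμK (p : X →₀ Λ) (hp : p ∈ ker ρ) : μ p = lam ⟨p, hK hp⟩ := congr($hμ ⟨p, hp⟩)
  obtain ⟨θ, hθ⟩ := exists_comp_eq_of_ker_le hρ (μ := v ∘ₗ μ) fun p hp => by
    simp [hμK p hp, hvlam, mem_ker.mp hp]
  obtain ⟨δ, hδ⟩ := exists_comp_eq_of_ker_le (P := PI) (X := range v) hρI
      (μ := μ ∘ₗ PI.subtype - lam) fun x hx => by
    simp [hμK x congr(Subtype.val $hx)]
  refine ⟨θ, δ, ?_, fun z => ?_⟩
  · rintro _ ⟨x, rfl⟩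
    obtain ⟨p, rfl⟩ := hρ x
    exact ⟨μ p, congr($hθ p).symm⟩
  · obtain ⟨x, rfl⟩ := hρI z
    have hvδ := congr(v ($hδ x))
    simp only [LinearMap.comp_apply, LinearMap.sub_apply, map_sub, hvlam] at hvδ
    rw [hvδ]
    show _ = θ (ρ x) - ρ x
    rw [← LinearMap.comp_apply θ ρ, hθ]
    rfl

theorem exists_section_of_isUnit_one_sub {θ : Module.End Λ X} (hθ : IsUnit (1 - θ))
    {v : V →ₗ[Λ] X} (hθv : range θ ≤ range v) {δ : range v →ₗ[Λ] V}
    (hδ : ∀ z : range v, v (δ z) = θ z - z) :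
    ∃ s : range v →ₗ[Λ] V, ∀ y : range v, v (s y) = y := by
  let σ : Module.End Λ X := ↑hθ.unit⁻¹
  have hσ (x : X) : σ x - θ (σ x) = x := congr($(hθ.mul_val_inv) x)
  have hσv : ∀ y ∈ range v, σ y ∈ range v := fun y hy => by
    rw [← sub_add_cancel (σ y) (θ (σ y)), hσ]
    exact add_mem hy (hθv (mem_range_self θ _))
  refine ⟨-(δ ∘ₗ σ.restrict hσv), fun y => ?_⟩
  simp only [LinearMap.neg_apply, LinearMap.comp_apply, map_neg, hδ, neg_sub]
  exact hσ y

theorem IsHereditaryRing.exists_section_of_not_surjective (hher : IsHereditaryRing Λ)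
    (hX : Indec Λ X) (hfl : IsFiniteLength Λ X) (hXV : ExtVanish Λ X V) {v : V →ₗ[Λ] X}
    (hv : ¬ Function.Surjective v) : ∃ s : range v →ₗ[Λ] V, ∀ y : range v, v (s y) = y := by
  obtain ⟨θ, δ, hθv, hδ⟩ := hher.exists_endomorphism_of_extVanish hXV v
  have hθ : ¬ IsUnit θ := fun hθ => hv fun x =>
    mem_range.mp (hθv (mem_range.mpr (((Module.End.isUnit_iff θ).mp hθ).2 x)))
  exact exists_section_of_isUnit_one_sub
    ((hX.isUnit_or_isNilpotent hfl θ).resolve_left hθ).isUnit_one_sub hθv hδ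

theorem comp_section_comp_rangeRestrict {v : V →ₗ[Λ] X} {s : range v →ₗ[Λ] V}
    (hs : ∀ y : range v, v (s y) = y) : v ∘ₗ s ∘ₗ v.rangeRestrict = v :=
  LinearMap.ext fun _ => hs _

theorem injective_of_section_of_rightMinimal {v : V →ₗ[Λ] X}
    (hmin : ∀ h : Module.End Λ V, v ∘ₗ h = v → Function.Bijective h) {s : range v →ₗ[Λ] V}
    (hs : ∀ y : range v, v (s y) = y) : Function.Injective v :=
  fun a b hab => (hmin _ (comp_section_comp_rangeRestrict hs)).1
    (congr_arg s (Subtype.ext hab : v.rangeRestrict a = v.rangeRestrict b))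

theorem IsHereditaryRing.isBrick (hher : IsHereditaryRing Λ) (hX : Indec Λ X)
    (hfl : IsFiniteLength Λ X) (hXX : ExtVanish Λ X X) : IsBrick Λ X := by
  obtain ⟨_, _⟩ := isFiniteLength_iff_isNoetherian_isArtinian.mp hfl
  have : Nontrivial X := not_subsingleton_iff_nontrivial.mp hX.1
  refine ⟨zero_ne_one, fun θ hθ0 => by_contra fun hθ => ?_⟩
  rw [Module.End.isUnit_iff] at hθ
  have hθs : ¬ Function.Surjective θ := fun h =>
    hθ ⟨IsNoetherian.injective_of_surjective_endomorphism θ h, h⟩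
  obtain ⟨s, hs⟩ := hher.exists_section_of_not_surjective hX hfl hXX hθs
  have hθe := comp_section_comp_rangeRestrict hs
  have he : IsIdempotentElem (s ∘ₗ θ.rangeRestrict) :=
    LinearMap.ext fun x => congr_arg s (Subtype.ext (hs _) : θ.rangeRestrict (s _) = _)
  rcases hX.eq_zero_or_eq_one_of_isIdempotentElem he with he0 | he1
  · exact hθ0 (by rw [← hθe, ← Module.End.mul_eq_comp, he0, mul_zero])
  · refine hθ (IsArtinian.bijective_of_injective_endomorphism θ fun a b hab => ?_)
    calc a = s (θ.rangeRestrict a) := congr($he1 a).symm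
      _ = s (θ.rangeRestrict b) := congr_arg s (Subtype.ext hab)
      _ = b := congr($he1 b)

theorem IsBrick.quotient_range [IsNoetherian Λ X] (hX : IsBrick Λ X) (hXV : ExtVanish Λ X V)
    {v : V →ₗ[Λ] X} (hv : Function.Injective v) [Nontrivial (X ⧸ range v)] :
    IsBrick Λ (X ⧸ range v) := by
  refine ⟨zero_ne_one, fun φ hφ => ?_⟩
  let π := (range v).mkQ
  obtain ⟨ψ, hψ⟩ := hXV.exists_lift_s3 hv (range v).mkQ_surjective (Submodule.ker_mkQ _).symm (φ ∘ₗ π)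
  have hψ0 : ψ ≠ 0 := fun h => hφ ((cancel_right (range v).mkQ_surjective).mp (by
    rw [← hψ, h, comp_zero, zero_comp]))
  have hφs : Function.Surjective φ := by
    have : Function.Surjective (φ ∘ₗ π) := by
      rw [← hψ]
      exact (range v).mkQ_surjective.comp ((Module.End.isUnit_iff ψ).mp (hX.2 ψ hψ0)).2
    exact Function.Surjective.of_comp this
  exact (Module.End.isUnit_iff φ).mpr
    ⟨IsNoetherian.injective_of_surjective_endomorphism φ hφs, hφs⟩

end Hereditary

section Normal

variable {t : ℕ} {Nf : Fin t → Type} [∀ i, AddCommGroup (Nf i)] [∀ i, Module Λ (Nf i)]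

theorem IsNormal.not_generates_summand (hN : IsNormal Λ (∀ j, Nf j)) {i : Fin t}
    (hi : ¬ Subsingleton (Nf i)) : ¬ Generates Λ (∀ j : {j | j ≠ i}, Nf j) (Nf i) := fun hgen =>
  hi <| hN _ _ ⟨(LinearEquiv.piCongrLeft Λ Nf (Equiv.optionSubtypeNe i)).symm ≪≫ₗ
    LinearEquiv.piOptionEquivProd Λ ≪≫ₗ LinearEquiv.prodComm Λ _ _⟩ hgen

theorem IsNormal.not_surjective (hN : IsNormal Λ (∀ j, Nf j)) {i : Fin t}
    (hi : ¬ Subsingleton (Nf i)) {U : Type} [AddCommGroup U] [Module Λ U]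
    (hU : InAddFam Λ t Nf {j | j ≠ i} U) (u : U →ₗ[Λ] Nf i) : ¬ Function.Surjective u :=
  fun hu => hN.not_generates_summand hi <|
    let ⟨n, g, hg⟩ := hU.generates
    ⟨n, u ∘ₗ g, hu.comp hg⟩

end Normal

theorem stmt3_general
    (Λ : Type) [Ring Λ]
    (hher : IsHereditaryRing Λ)
    (t : ℕ) (Nf : Fin t → Type) [∀ i, AddCommGroup (Nf i)] [∀ i, Module Λ (Nf i)]
    (hfl : ∀ i, IsFiniteLength Λ (Nf i)) (hind : ∀ i, Indec Λ (Nf i))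
    (hnorm : IsNormal Λ (∀ i, Nf i)) (hself : ExtVanish Λ (∀ i, Nf i) (∀ i, Nf i))
    (U : Fin t → Type) [∀ i, AddCommGroup (U i)] [∀ i, Module Λ (U i)]
    (u : ∀ i, U i →ₗ[Λ] Nf i)
    (hUadd : ∀ i, InAddFam Λ t Nf {j | j ≠ i} (U i))
    (hmin : ∀ i, ∀ h : U i →ₗ[Λ] U i, (u i).comp h = u i → Function.Bijective h) :
    ∀ i, Function.Injective (u i) ∧ ¬ Function.Surjective (u i) ∧
      ¬ Subsingleton (Nf i ⧸ LinearMap.range (u i)) ∧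
      IsBrick Λ (Nf i ⧸ LinearMap.range (u i)) := by
  intro i
  have hNi : ExtVanish Λ (Nf i) (∀ j, Nf j) :=
    hself.of_retract_left (single Λ Nf i) (proj i) (proj_comp_single_same Λ Nf i)
  have hUi : ExtVanish Λ (Nf i) (U i) := hNi.of_inAddFam (hUadd i)
  have hsurj := hnorm.not_surjective (hind i).1 (hUadd i) (u i)
  obtain ⟨s, hs⟩ := hher.exists_section_of_not_surjective (hind i) (hfl i) hUi hsurj
  have hinj := injective_of_section_of_rightMinimal (hmin i) hs
  have : Nontrivial (Nf i ⧸ range (u i)) :=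
    Submodule.Quotient.nontrivial_iff.mpr (hsurj ∘ range_eq_top.mp)
  have : IsNoetherian Λ (Nf i) := (isFiniteLength_iff_isNoetherian_isArtinian.mp (hfl i)).1
  have hbrick := hher.isBrick (hind i) (hfl i)
    (hNi.of_retract_right (single Λ Nf i) (proj i) (proj_comp_single_same Λ Nf i))
  exact ⟨hinj, hsurj, not_subsingleton_iff_nontrivial.mpr ‹_›, hbrick.quotient_range hUi hinj⟩

/-- For a normal module `N = ⊕ Nᵢ` without self-extensions, each minimal right
approximation `uᵢ : Uᵢ → Nᵢ` is injective, not surjective, and its cokernel `Δ(i)` is a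
nonzero brick. -/
theorem stmt3 (k : Type) [CommRing k] [IsArtinianRing k]
    (Λ : Type) [Ring Λ] [Algebra k Λ] (hart : IsFiniteLength k Λ)
    (hher : IsHereditaryRing Λ)
    (t : ℕ) (Nf : Fin t → Type) [∀ i, AddCommGroup (Nf i)] [∀ i, Module Λ (Nf i)]
    (hfl : ∀ i, IsFiniteLength Λ (Nf i)) (hind : ∀ i, Indec Λ (Nf i))
    (hnorm : IsNormal Λ (∀ i, Nf i)) (hself : ExtVanish Λ (∀ i, Nf i) (∀ i, Nf i))
    (U : Fin t → Type) [∀ i, AddCommGroup (U i)] [∀ i, Module Λ (U i)]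
    (u : ∀ i, U i →ₗ[Λ] Nf i)
    (hUadd : ∀ i, InAddFam Λ t Nf {j | j ≠ i} (U i))
    (happrox : ∀ i, ∀ (X : Type) [AddCommGroup X] [Module Λ X],
      InAddFam Λ t Nf {j | j ≠ i} X →
      ∀ f : X →ₗ[Λ] Nf i, ∃ h : X →ₗ[Λ] U i, (u i).comp h = f)
    (hmin : ∀ i, ∀ h : U i →ₗ[Λ] U i, (u i).comp h = u i → Function.Bijective h) :
    ∀ i, Function.Injective (u i) ∧ ¬ Function.Surjective (u i) ∧
      ¬ Subsingleton (Nf i ⧸ LinearMap.range (u i)) ∧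
      IsBrick Λ (Nf i ⧸ LinearMap.range (u i)) :=
  stmt3_general Λ hher t Nf hfl hind hnorm hself U u hUadd hmin
end
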